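/- arXiv:2212.02118 — 2 statements merged into one kernel-verified Lean document; each statement's English description precedes it below -/
import Mathlib

section
/- For every natural number n, the Fibonacci number F_{n+1} satisfies F_{n+1} = ∑_{j∈ℤ} (−1)^j C(n, ⌊(n+5j)/2⌋), where the sum has only finitely many nonzero terms. -/
/-- Binomial coefficient `C(a, r)` with integer lower index, equal to `0` for `r < 0`. -/
noncomputable def Cz (a : ℕ) (r : ℤ) : ℝ :=
  if 0 ≤ r then (a.choose r.toNat : ℝ) else 0

lemma Cz_of_neg {a : ℕ} {r : ℤ} (h : r < 0) : Cz a r = 0 := by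
  simp [Cz, not_le.mpr h]

lemma Cz_of_gt {a : ℕ} {r : ℤ} (h : (a : ℤ) < r) : Cz a r = 0 := by
  have h0 : 0 ≤ r := by omega
  have : a < r.toNat := by omega
  simp [Cz, h0, Nat.choose_eq_zero_of_lt this]

lemma Cz_symm (a : ℕ) (r : ℤ) : Cz a r = Cz a ((a : ℤ) - r) := by
  rcases lt_or_ge r 0 with h | h
  · rw [Cz_of_neg h, Cz_of_gt (by omega : (a:ℤ) < (a:ℤ) - r)]
  rcases le_or_gt r (a : ℤ) with h2 | h2
  · have h3 : (0:ℤ) ≤ (a:ℤ) - r := by omega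
    simp only [Cz, if_pos h, if_pos h3]
    have : ((a:ℤ) - r).toNat = a - r.toNat := by omega
    rw [this, Nat.choose_symm (show r.toNat ≤ a by omega)]
  · rw [Cz_of_gt h2, Cz_of_neg (by omega : (a:ℤ) - r < 0)]

lemma Cz_pascal (a : ℕ) (r : ℤ) : Cz (a + 1) r = Cz a r + Cz a (r - 1) := by
  rcases lt_or_ge r 0 with h | h
  · rw [Cz_of_neg h, Cz_of_neg h, Cz_of_neg (by omega)]; ring
  rcases eq_or_lt_of_le h with h0 | h0
  · rw [← h0]; simp [Cz, Cz_of_neg (show (0:ℤ) - 1 < 0 by omega)]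
  · have h1 : (0:ℤ) ≤ r - 1 := by omega
    simp only [Cz, if_pos h, if_pos h1]
    have : r.toNat = (r - 1).toNat + 1 := by omega
    rw [this, Nat.choose_succ_succ']
    push_cast; ring

/-- The summand of the shifted alternating binomial sum. -/
noncomputable def T (s : ℤ) (n : ℕ) (j : ℤ) : ℝ :=
  (-1 : ℝ) ^ j * Cz n (((n : ℤ) + 5 * j + s).fdiv 2)

/-- The shifted alternating binomial sum. -/
noncomputable def S (s : ℤ) (n : ℕ) : ℝ := ∑ᶠ j : ℤ, T s n j

lemma T_supp (s : ℤ) (n : ℕ) : (Function.support (T s n)).Finite := by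
  apply Set.Finite.subset (Set.finite_Icc (-(n:ℤ) - s.natAbs - 5) ((n:ℤ) + s.natAbs + 5))
  intro j hj
  simp only [Function.mem_support, T] at hj
  have hCz : Cz n (((n : ℤ) + 5 * j + s).fdiv 2) ≠ 0 := by
    intro h; rw [h, mul_zero] at hj; exact hj rfl
  have h1 : 0 ≤ ((n : ℤ) + 5 * j + s).fdiv 2 := by
    by_contra h; exact hCz (Cz_of_neg (by omega))
  have h2 : ((n : ℤ) + 5 * j + s).fdiv 2 ≤ (n : ℤ) := by
    by_contra h; exact hCz (Cz_of_gt (by omega))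
  rw [Int.fdiv_eq_ediv_of_nonneg _ (by norm_num)] at h1 h2
  simp only [Set.mem_Icc]
  omega

lemma S_pascal (s : ℤ) (n : ℕ) : S s (n + 1) = S (s + 1) n + S (s - 1) n := by
  have key : ∀ j : ℤ, T s (n + 1) j = T (s + 1) n j + T (s - 1) n j := by
    intro j
    simp only [T]
    push_cast
    have e1 : ((n : ℤ) + 1 + 5 * j + s).fdiv 2 = ((n : ℤ) + 5 * j + (s + 1)).fdiv 2 := by
      ring_nf
    have e2 : ((n : ℤ) + 1 + 5 * j + s).fdiv 2 - 1 = ((n : ℤ) + 5 * j + (s - 1)).fdiv 2 := by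
      rw [Int.fdiv_eq_ediv_of_nonneg _ (by norm_num), Int.fdiv_eq_ediv_of_nonneg _ (by norm_num)]
      omega
    rw [Cz_pascal, e2, e1]
    ring
  unfold S
  rw [finsum_congr key, finsum_add_distrib (T_supp _ _) (T_supp _ _)]

lemma S_shift (s : ℤ) (n : ℕ) : S (s - 5) n = -S s n := by
  have key : ∀ j : ℤ, T (s - 5) n j = -T s n (j - 1) := by
    intro j
    simp only [T]
    have e : ((n : ℤ) + 5 * j + (s - 5)) = ((n : ℤ) + 5 * (j - 1) + s) := by ring
    rw [e]
    have hs : (-1 : ℝ) ^ j = -(-1 : ℝ) ^ (j - 1) := by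
      rw [zpow_sub_one₀ (by norm_num : (-1:ℝ) ≠ 0), inv_neg, inv_one]
      ring
    rw [hs]; ring
  unfold S
  rw [finsum_congr key]
  have h2 : (∑ᶠ j : ℤ, -T s n (j - 1)) = ∑ᶠ j : ℤ, -T s n j :=
    finsum_comp_equiv (Equiv.subRight (1 : ℤ)) (f := fun j => -T s n j)
  rw [h2, finsum_neg_distrib]

lemma S_reflect (s : ℤ) (n : ℕ) : S s n = S (1 - s) n := by
  have key : ∀ j : ℤ, T s n j = T (1 - s) n (-j) := by
    intro j
    simp only [T]
    have hs : (-1 : ℝ) ^ (-j) = (-1 : ℝ) ^ j := by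
      rw [zpow_neg, ← inv_zpow, inv_neg, inv_one]
    rw [hs]
    congr 1
    rw [Cz_symm]
    congr 1
    rw [Int.fdiv_eq_ediv_of_nonneg _ (by norm_num), Int.fdiv_eq_ediv_of_nonneg _ (by norm_num)]
    omega
  unfold S
  rw [finsum_congr key]
  exact finsum_comp_equiv (Equiv.neg ℤ) (f := T (1 - s) n)

lemma S3_zero (n : ℕ) : S 3 n = 0 := by
  have h1 := S_reflect 3 n
  have h2 := S_shift 3 n
  norm_num at h1 h2
  linarith

lemma S0_zero : S 0 0 = 1 := by
  unfold S
  rw [finsum_eq_single _ (0 : ℤ)]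
  · simp [T, Cz, Int.fdiv]
  · intro j hj
    simp only [T, Nat.cast_zero]
    rcases lt_or_gt_of_ne hj with h | h
    · rw [Cz_of_neg (by rw [Int.fdiv_eq_ediv_of_nonneg _ (by norm_num)]; omega), mul_zero]
    · rw [Cz_of_gt (by rw [Int.fdiv_eq_ediv_of_nonneg _ (by norm_num)]; push_cast; omega), mul_zero]

lemma Sneg1_zero : S (-1) 0 = 0 := by
  unfold S
  apply finsum_eq_zero_of_forall_eq_zero
  intro j
  simp only [T, Nat.cast_zero]
  rcases le_or_gt j 0 with h | h
  · rw [Cz_of_neg (by rw [Int.fdiv_eq_ediv_of_nonneg _ (by norm_num)]; omega), mul_zero]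
  · rw [Cz_of_gt (by rw [Int.fdiv_eq_ediv_of_nonneg _ (by norm_num)]; push_cast; omega), mul_zero]

lemma fib_S : ∀ n : ℕ, S 0 n = Nat.fib (n + 1) ∧ S (-1) n = Nat.fib n := by
  intro n
  induction n with
  | zero => simpa using ⟨S0_zero, Sneg1_zero⟩
  | succ k ih =>
    obtain ⟨h0, h1⟩ := ih
    have p0 := S_pascal 0 k
    have p1 := S_pascal (-1) k
    have r1 := S_reflect 1 k
    have z := S3_zero k
    have sh := S_shift 3 k
    norm_num at p0 p1 r1 sh
    constructor
    · rw [p0, r1, h0, h1, Nat.fib_add_two]; push_cast; ring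
    · rw [p1, sh, z, h0]; ring

theorem stmt2 (n : ℕ) :
    (Nat.fib (n + 1) : ℝ) = ∑ᶠ j : ℤ, (-1 : ℝ) ^ j * Cz n (((n : ℤ) + 5 * j).fdiv 2) := by
  have h := (fib_S n).1
  have he : (∑ᶠ j : ℤ, (-1 : ℝ) ^ j * Cz n (((n : ℤ) + 5 * j).fdiv 2)) = S 0 n := by
    unfold S
    apply finsum_congr
    intro j
    simp [T]
  rw [he, h]
end

section
/- For every natural number m and every real number x, L_{2m}(x, −1) − 2 = (x² − 4)·F_m(x, −1)². -/
/-- The Lucas polynomials: `L_0(x,s) = 2`, `L_1(x,s) = x`,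
`L_n(x,s) = x·L_{n-1}(x,s) + s·L_{n-2}(x,s)`. -/
def LucasPoly : ℕ → ℝ → ℝ → ℝ
  | 0, _, _ => 2
  | 1, x, _ => x
  | n + 2, x, s => x * LucasPoly (n + 1) x s + s * LucasPoly n x s

/-- The Fibonacci polynomials: `F_0(x,s) = 0`, `F_1(x,s) = 1`,
`F_n(x,s) = x·F_{n-1}(x,s) + s·F_{n-2}(x,s)`. -/
def FibPoly : ℕ → ℝ → ℝ → ℝ
  | 0, _, _ => 0
  | 1, _, _ => 1
  | n + 2, x, s => x * FibPoly (n + 1) x s + s * FibPoly n x s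

lemma Lrec (n : ℕ) (x s : ℝ) :
    LucasPoly (n + 2) x s = x * LucasPoly (n + 1) x s + s * LucasPoly n x s := rfl

lemma Frec (n : ℕ) (x s : ℝ) :
    FibPoly (n + 2) x s = x * FibPoly (n + 1) x s + s * FibPoly n x s := rfl

lemma cassini (m : ℕ) (x : ℝ) :
    (FibPoly (m + 1) x (-1)) ^ 2 - x * FibPoly m x (-1) * FibPoly (m + 1) x (-1)
      + (FibPoly m x (-1)) ^ 2 = 1 := by
  induction m with
  | zero => simp [FibPoly]
  | succ n ih =>
    rw [Frec]
    nlinarith [ih]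

lemma Ldouble (m : ℕ) (x : ℝ) :
    LucasPoly (2 * m) x (-1)
        = 2 * (FibPoly (m + 1) x (-1)) ^ 2
          - 2 * x * FibPoly m x (-1) * FibPoly (m + 1) x (-1)
          + x ^ 2 * (FibPoly m x (-1)) ^ 2 - 2 * (FibPoly m x (-1)) ^ 2 ∧
      LucasPoly (2 * m + 1) x (-1)
        = x * (FibPoly (m + 1) x (-1)) ^ 2
          - 4 * FibPoly m x (-1) * FibPoly (m + 1) x (-1)
          + x * (FibPoly m x (-1)) ^ 2 := by
  induction m with
  | zero => simp [LucasPoly, FibPoly]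
  | succ n ih =>
    obtain ⟨h1, h2⟩ := ih
    have e1 : 2 * (n + 1) = 2 * n + 2 := by ring
    have e2 : 2 * n + 2 + 1 = 2 * n + 1 + 2 := by ring
    rw [e1, e2, Lrec, Lrec, Lrec, Frec, h1, h2]
    constructor <;> ring

theorem stmt18 (m : ℕ) (x : ℝ) :
    LucasPoly (2 * m) x (-1) - 2 = (x ^ 2 - 4) * (FibPoly m x (-1)) ^ 2 := by
  have h := (Ldouble m x).1
  have hc := cassini m x
  rw [h]
  linarith [hc]
end
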